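/- arXiv:1402.3831 — 4 statements merged into one kernel-verified Lean document; each statement's English description precedes it below -/
import Mathlib

section
/- Suppose θ > 0 and L > L_d(θ). Then there exist X_M and X_m with 0 < X_M < 2θ/5 < X_m < θ such that f′(X) ≥ 0 for all X ∈ (0, X_M] ∪ [X_m, θ) and f′(X) < 0 for all X ∈ (X_M, X_m). Moreover X_m is the unique X ∈ (2θ/5, θ) with f′(X) = 0, and every global minimizer of f on D belongs to the two-point set {0, min(θ̃⁺, X_m)}. -/
open Real Set

/-- The auxiliary energy `f(X) = (θ - X)^(-1/2) - L·X²` for `0 < X < θ`, with `f(0) = 0`. -/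
noncomputable def f (θ L X : ℝ) : ℝ :=
  if X = 0 then 0 else (θ - X) ^ (-(1:ℝ)/2) - L * X ^ 2

/-- `L_d(θ) = (25/24)·√(5/3)·θ^(-5/2)`. -/
noncomputable def Ld (θ : ℝ) : ℝ := (25/24) * Real.sqrt (5/3) * θ ^ (-(5:ℝ)/2)

/-- `θ* = (5/4)·α^(-1/2)`. -/
noncomputable def θstar (α : ℝ) : ℝ := (5/4) * α ^ (-(1:ℝ)/2)

/-- `L_01(θ) = (5^(5/2)/16)·θ^(-5/2)`. -/
noncomputable def L01 (θ : ℝ) : ℝ := ((5:ℝ) ^ ((5:ℝ)/2) / 16) * θ ^ (-(5:ℝ)/2)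

/-- `L_02(θ) = α^(5/4)·(√α·θ - 1)^(-1/2)`. -/
noncomputable def L02 (α θ : ℝ) : ℝ := α ^ ((5:ℝ)/4) * (Real.sqrt α * θ - 1) ^ (-(1:ℝ)/2)

/-- `L_12(θ) = (2α³θ + 2α²√(α(αθ² - 1)))^(1/2)`. -/
noncomputable def L12 (α θ : ℝ) : ℝ :=
  Real.sqrt (2*α^3*θ + 2*α^2 * Real.sqrt (α*(α*θ^2 - 1)))

open Filter Topology

/-! On `(0, θ)` the derivative of `f` is `fDeriv θ L X = (θ - X)^(-3/2)/2 - 2·L·X`, a strictly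
convex function that is positive at `0` and tends to `+∞` at `θ`. The hypothesis `L > L_d(θ)` says
exactly that it is negative at `2θ/5`, so it has two zeros `X_M < 2θ/5 < X_m` and is negative
precisely between them: `f` rises, falls, and rises again. A nonzero minimizer of `f` on `D` is
therefore either an interior critical point, which must be `X_m` because `f` decreases right after
`X_M`, or the right endpoint of `D`, which can only be minimal if it does not lie beyond `X_m`. -/

section StrictConvexOn

variable {𝕜 β : Type*} [Field 𝕜] [LinearOrder 𝕜] [IsStrictOrderedRing 𝕜]
  [AddCommMonoid β] [LinearOrder β] [IsOrderedAddMonoid β] [Module 𝕜 β] [PosSMulStrictMono 𝕜 β]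
  {s : Set 𝕜} {φ : 𝕜 → β} {a b c : 𝕜}

theorem StrictConvexOn.neg_of_mem_Ioo (hφ : StrictConvexOn 𝕜 s φ) (ha : a ∈ s) (hc : c ∈ s)
    (hφa : φ a ≤ 0) (hφc : φ c ≤ 0) (hb : b ∈ Ioo a c) : φ b < 0 := by
  have hac : a < c := hb.1.trans hb.2
  calc φ b < max (φ a) (φ c) :=
        hφ.lt_on_openSegment ha hc hac.ne (by rwa [openSegment_eq_Ioo hac])
    _ ≤ 0 := max_le hφa hφc

theorem StrictConvexOn.pos_of_lt (hφ : StrictConvexOn 𝕜 s φ) (ha : a ∈ s) (hc : c ∈ s)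
    (hab : a < b) (hbc : b < c) (hφb : 0 ≤ φ b) (hφc : φ c ≤ 0) : 0 < φ a := by
  by_contra! hφa
  exact (hφ.neg_of_mem_Ioo ha hc hφa hφc ⟨hab, hbc⟩).not_ge hφb

theorem StrictConvexOn.pos_of_gt (hφ : StrictConvexOn 𝕜 s φ) (ha : a ∈ s) (hc : c ∈ s)
    (hab : a < b) (hbc : b < c) (hφa : φ a ≤ 0) (hφb : 0 ≤ φ b) : 0 < φ c := by
  by_contra! hφc
  exact (hφ.neg_of_mem_Ioo ha hc hφa hφc ⟨hab, hbc⟩).not_ge hφb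

end StrictConvexOn

theorem eq_zero_or_eq_min_of_isMinOn {F F' : ℝ → ℝ} {θ XM Xm M X : ℝ}
    (hF : ∀ x ∈ Ioo 0 θ, HasDerivAt F (F' x) x) (hXM : 0 < XM) (hXMXm : XM < Xm)
    (hleft : ∀ x ∈ Ioo 0 XM, 0 < F' x) (hmid : ∀ x ∈ Ioo XM Xm, F' x < 0)
    (hright : ∀ x ∈ Ioo Xm θ, 0 < F' x) (hM : M < θ) (hX : X ∈ Icc 0 M)
    (hmin : IsMinOn F (Icc 0 M) X) : X = 0 ∨ X = min M Xm := by
  by_contra! hne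
  have hX0 : 0 < X := hX.1.lt_of_ne' hne.1
  have hcont : ContinuousOn F (Ioo 0 θ) := fun x hx => (hF x hx).continuousAt.continuousWithinAt
  rcases hne.2.lt_or_gt with hlt | hgt
  · have hcrit : F' X = 0 := (hmin.isLocalMin (Icc_mem_nhds hX0 (hlt.trans_le (min_le_left _ _)))
      ).hasDerivAt_eq_zero (hF X ⟨hX0, hX.2.trans_lt hM⟩)
    obtain rfl : X = XM := by
      rcases lt_trichotomy X XM with h | h | h
      · exact absurd hcrit (hleft X ⟨hX0, h⟩).ne'
      · exact h
      · exact absurd hcrit (hmid X ⟨h, hlt.trans_le (min_le_right _ _)⟩).ne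
    have hsub : Icc X (min M Xm) ⊆ Ioo 0 θ := Icc_subset_Ioo hX0 ((min_le_left _ _).trans_lt hM)
    have hanti : StrictAntiOn F (Icc X (min M Xm)) := by
      refine strictAntiOn_of_deriv_neg (convex_Icc _ _) (hcont.mono hsub) fun x hx => ?_
      rw [interior_Icc] at hx
      rw [(hF x (hsub (Ioo_subset_Icc_self hx))).deriv]
      exact hmid x ⟨hx.1, hx.2.trans_le (min_le_right _ _)⟩
    exact (hanti ⟨le_rfl, hlt.le⟩ ⟨hlt.le, le_rfl⟩ hlt).not_ge
      (hmin ⟨(hX0.trans hlt).le, min_le_left _ _⟩)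
  · have hXmX : Xm < X := (min_lt_iff.1 hgt).resolve_left hX.2.not_gt
    have hsub : Icc Xm X ⊆ Ioo 0 θ := Icc_subset_Ioo (hXM.trans hXMXm) (hX.2.trans_lt hM)
    have hmono : StrictMonoOn F (Icc Xm X) := by
      refine strictMonoOn_of_deriv_pos (convex_Icc _ _) (hcont.mono hsub) fun x hx => ?_
      rw [interior_Icc] at hx
      rw [(hF x (hsub (Ioo_subset_Icc_self hx))).deriv]
      exact hright x ⟨hx.1, (hsub (Ioo_subset_Icc_self hx)).2⟩
    exact (hmono ⟨le_rfl, hXmX.le⟩ ⟨hXmX.le, le_rfl⟩ hXmX).not_ge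
      (hmin ⟨(hXM.trans hXMXm).le, hXmX.le.trans hX.2⟩)

noncomputable def fDeriv (θ L X : ℝ) : ℝ := (θ - X) ^ (-(3:ℝ)/2) / 2 - 2 * L * X

theorem hasDerivAt_f {θ L X : ℝ} (hX0 : 0 < X) (hXθ : X < θ) :
    HasDerivAt (f θ L) (fDeriv θ L X) X := by
  have h := (((hasDerivAt_id X).const_sub θ).rpow_const (p := -(1:ℝ)/2)
    (Or.inl (sub_pos.2 hXθ).ne')).sub ((hasDerivAt_pow 2 X).const_mul L)
  refine (h.congr_deriv ?_).congr_of_eventuallyEq ?_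
  · rw [fDeriv, id, show -(1:ℝ)/2 - 1 = -(3:ℝ)/2 by norm_num]
    ring
  · filter_upwards [eventually_ne_nhds hX0.ne'] with x hx
    simp [f, hx]

/- `L_d(θ)` is the minimum over `0 < X < θ` of `(θ - X)^(-3/2) / (4X)`, the value of `L` at which
`fDeriv θ L X` vanishes; the minimum is attained at `X = 2θ/5`. -/
theorem fDeriv_two_fifths {θ : ℝ} (L : ℝ) (hθ : 0 < θ) :
    fDeriv θ L (2 * θ / 5) = 4 * θ / 5 * (Ld θ - L) := by
  have h35 : ((3:ℝ) / 5) ^ (-(3:ℝ)/2) = 5 / 3 * √(5 / 3) := by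
    rw [show (3:ℝ) / 5 = (5 / 3)⁻¹ by norm_num, inv_rpow (by norm_num), ← rpow_neg (by norm_num),
      show -(-(3:ℝ)/2) = 1 + 1 / 2 by norm_num, rpow_add (by norm_num), rpow_one, ← sqrt_eq_rpow]
  have hθ32 : θ ^ (-(3:ℝ)/2) = θ * θ ^ (-(5:ℝ)/2) := by
    rw [← rpow_one_add' hθ.le (by norm_num)]
    norm_num
  rw [fDeriv, Ld, show θ - 2 * θ / 5 = 3 / 5 * θ by ring, mul_rpow (by norm_num) hθ.le, h35, hθ32]
  ring

theorem hasDerivAt_fDeriv (θ L : ℝ) {X : ℝ} (hX : X < θ) :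
    HasDerivAt (fDeriv θ L) (3 / 4 * (θ - X) ^ (-(5:ℝ)/2) - 2 * L) X := by
  have h := ((((hasDerivAt_id X).const_sub θ).rpow_const (p := -(3:ℝ)/2)
    (Or.inl (sub_pos.2 hX).ne')).div_const 2).sub ((hasDerivAt_id X).const_mul (2 * L))
  refine h.congr_deriv ?_
  rw [id, show -(3:ℝ)/2 - 1 = -(5:ℝ)/2 by norm_num]
  ring

theorem continuousOn_fDeriv (θ L : ℝ) : ContinuousOn (fDeriv θ L) (Iio θ) :=
  fun _ hX => (hasDerivAt_fDeriv θ L hX).continuousAt.continuousWithinAt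

theorem strictConvexOn_fDeriv (θ L : ℝ) : StrictConvexOn ℝ (Iio θ) (fDeriv θ L) := by
  refine StrictMonoOn.strictConvexOn_of_deriv (convex_Iio θ) (continuousOn_fDeriv θ L) ?_
  rw [interior_Iio]
  intro x hx y hy hxy
  rw [(hasDerivAt_fDeriv θ L hx).deriv, (hasDerivAt_fDeriv θ L hy).deriv]
  have : (θ - x) ^ (-(5:ℝ)/2) < (θ - y) ^ (-(5:ℝ)/2) :=
    rpow_lt_rpow_of_neg (sub_pos.2 hy) (by linarith) (by norm_num)
  linarith

theorem tendsto_fDeriv_nhdsLT (θ L : ℝ) : Tendsto (fDeriv θ L) (𝓝[<] θ) atTop := by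
  have hgap : Tendsto (fun x => θ - x) (𝓝[<] θ) (𝓝[>] 0) := by
    refine tendsto_nhdsWithin_iff.2 ⟨?_, ?_⟩
    · simpa using ((continuous_sub_left θ).tendsto θ).mono_left nhdsWithin_le_nhds
    · filter_upwards [self_mem_nhdsWithin] with x hx using sub_pos.2 (mem_Iio.1 hx)
  have hpow := ((tendsto_rpow_neg_nhdsGT_zero (by norm_num : -(3:ℝ)/2 < 0)).comp
    hgap).atTop_div_const (by norm_num : (0:ℝ) < 2)
  have hlin : Tendsto (fun x => -(2 * L * x)) (𝓝[<] θ) (𝓝 (-(2 * L * θ))) :=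
    ((continuous_const.mul continuous_id).neg.tendsto θ).mono_left nhdsWithin_le_nhds
  refine (hpow.atTop_add hlin).congr fun x => ?_
  simp only [fDeriv, Function.comp_apply]
  ring

theorem Ld_pos {θ : ℝ} (hθ : 0 < θ) : 0 < Ld θ := by
  unfold Ld; positivity

theorem fDeriv_two_fifths_neg {θ L : ℝ} (hθ : 0 < θ) (hL : Ld θ < L) :
    fDeriv θ L (2 * θ / 5) < 0 := by
  rw [fDeriv_two_fifths L hθ]
  exact mul_neg_of_pos_of_neg (by positivity) (sub_neg.2 hL)

theorem exists_zeros_fDeriv {θ L : ℝ} (hθ : 0 < θ) (hL : Ld θ < L) :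
    ∃ XM Xm : ℝ, 0 < XM ∧ XM < 2 * θ / 5 ∧ 2 * θ / 5 < Xm ∧ Xm < θ ∧
      fDeriv θ L XM = 0 ∧ fDeriv θ L Xm = 0 := by
  have h0_pos : 0 < fDeriv θ L 0 := by
    simp only [fDeriv, sub_zero, mul_zero]
    positivity
  obtain ⟨X₁, hX₁_pos, hX₁⟩ := ((tendsto_fDeriv_nhdsLT θ L).eventually_gt_atTop 0).and
    (Ioo_mem_nhdsLT (by linarith : 2 * θ / 5 < θ)) |>.exists
  obtain ⟨XM, ⟨hXM0, hXM⟩, hXM_zero⟩ := intermediate_value_Ioo' (by linarith)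
    ((continuousOn_fDeriv θ L).mono (Icc_subset_Iic_self.trans (Iic_subset_Iio.2 (by linarith))))
    ⟨fDeriv_two_fifths_neg hθ hL, h0_pos⟩
  obtain ⟨Xm, ⟨hXm, hXmX₁⟩, hXm_zero⟩ := intermediate_value_Ioo hX₁.1.le
    ((continuousOn_fDeriv θ L).mono (Icc_subset_Iic_self.trans (Iic_subset_Iio.2 hX₁.2)))
    ⟨fDeriv_two_fifths_neg hθ hL, hX₁_pos⟩
  exact ⟨XM, Xm, hXM0, hXM, hXm, hXmX₁.trans hX₁.2, hXM_zero, hXm_zero⟩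

theorem exists_sign_pattern_fDeriv {θ L : ℝ} (hθ : 0 < θ) (hL : Ld θ < L) :
    ∃ XM Xm : ℝ, 0 < XM ∧ XM < 2 * θ / 5 ∧ 2 * θ / 5 < Xm ∧ Xm < θ ∧
      fDeriv θ L XM = 0 ∧ fDeriv θ L Xm = 0 ∧ (∀ X ∈ Ioo 0 XM, 0 < fDeriv θ L X) ∧
      (∀ X ∈ Ioo XM Xm, fDeriv θ L X < 0) ∧ ∀ X ∈ Ioo Xm θ, 0 < fDeriv θ L X := by
  obtain ⟨XM, Xm, hXM0, hXM, hXm, hXmθ, hXM_zero, hXm_zero⟩ := exists_zeros_fDeriv hθ hL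
  have hconv := strictConvexOn_fDeriv θ L
  have hp := fDeriv_two_fifths_neg hθ hL
  have hp_mem : 2 * θ / 5 ∈ Iio θ := by simp only [mem_Iio]; linarith
  refine ⟨XM, Xm, hXM0, hXM, hXm, hXmθ, hXM_zero, hXm_zero, fun X hX => ?_, fun X hX => ?_,
    fun X hX => ?_⟩
  · exact hconv.pos_of_lt (mem_Iio.2 (by linarith [hX.2])) hp_mem hX.2 hXM hXM_zero.ge hp.le
  · exact hconv.neg_of_mem_Ioo (mem_Iio.2 (by linarith)) (mem_Iio.2 hXmθ) hXM_zero.le hXm_zero.le hX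
  · exact hconv.pos_of_gt hp_mem (mem_Iio.2 hX.2) hXm hX.1 hp.le hXm_zero.ge

theorem stmt_1_general (α θ L : ℝ) (hα : 0 < α) (hθ : 0 < θ) (hL : Ld θ < L) :
    ∃ XM Xm : ℝ, 0 < XM ∧ XM < 2*θ/5 ∧ 2*θ/5 < Xm ∧ Xm < θ ∧
      (∀ X ∈ Ioc (0:ℝ) XM, 0 ≤ deriv (f θ L) X) ∧
      (∀ X ∈ Ico Xm θ, 0 ≤ deriv (f θ L) X) ∧
      (∀ X ∈ Ioo XM Xm, deriv (f θ L) X < 0) ∧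
      (∀ X ∈ Ioo (2*θ/5) θ, (deriv (f θ L) X = 0 ↔ X = Xm)) ∧
      (∀ X ∈ Icc (0:ℝ) (max (θ - α^2/L^2) 0),
        (∀ Y ∈ Icc (0:ℝ) (max (θ - α^2/L^2) 0), f θ L X ≤ f θ L Y) →
        (X = 0 ∨ X = min (max (θ - α^2/L^2) 0) Xm)) := by
  obtain ⟨XM, Xm, hXM0, hXM, hXm, hXmθ, hXM_zero, hXm_zero, hleft, hmid, hright⟩ :=
    exists_sign_pattern_fDeriv hθ hL
  have hf' : ∀ X ∈ Ioo 0 θ, HasDerivAt (f θ L) (fDeriv θ L X) X :=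
    fun X hX => hasDerivAt_f hX.1 hX.2
  have hderiv : ∀ X ∈ Ioo 0 θ, deriv (f θ L) X = fDeriv θ L X := fun X hX => (hf' X hX).deriv
  refine ⟨XM, Xm, hXM0, hXM, hXm, hXmθ, fun X hX => ?_, fun X hX => ?_, fun X hX => ?_,
    fun X hX => ?_, fun X hX hmin => ?_⟩
  · rw [hderiv X ⟨hX.1, by linarith [hX.2]⟩]
    rcases hX.2.eq_or_lt with rfl | h
    exacts [hXM_zero.ge, (hleft X ⟨hX.1, h⟩).le]
  · rw [hderiv X ⟨by linarith [hX.1], hX.2⟩]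
    rcases hX.1.eq_or_lt with rfl | h
    exacts [hXm_zero.ge, (hright X ⟨h, hX.2⟩).le]
  · rw [hderiv X ⟨by linarith [hX.1], by linarith [hX.2]⟩]
    exact hmid X hX
  · rw [hderiv X ⟨by linarith [hX.1], hX.2⟩]
    rcases lt_trichotomy X Xm with h | rfl | h
    · simp [(hmid X ⟨by linarith [hX.1], h⟩).ne, h.ne]
    · simp [hXm_zero]
    · simp [(hright X ⟨h, hX.2⟩).ne', h.ne']
  · have hL0 : 0 < L := (Ld_pos hθ).trans hL
    have hM : max (θ - α^2/L^2) 0 < θ :=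
      max_lt (by linarith [show 0 < α^2/L^2 by positivity]) hθ
    exact eq_zero_or_eq_min_of_isMinOn hf' hXM0 (hXM.trans hXm) hleft hmid hright hM hX
      (isMinOn_iff.2 hmin)

/-- If `θ > 0` and `L > L_d(θ)`, there exist `0 < X_M < 2θ/5 < X_m < θ` with
`f' ≥ 0` on `(0, X_M] ∪ [X_m, θ)`, `f' < 0` on `(X_M, X_m)`, `X_m` is the unique zero of
`f'` in `(2θ/5, θ)`, and every global minimizer of `f` on `D` lies in `{0, min(θ̃⁺, X_m)}`. -/
theorem stmt_1 (α θ L : ℝ) (hα : 0 < α) (hθ : 0 < θ) (hL0 : 0 < L) (hL : Ld θ < L) :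
    ∃ XM Xm : ℝ, 0 < XM ∧ XM < 2*θ/5 ∧ 2*θ/5 < Xm ∧ Xm < θ ∧
      (∀ X ∈ Ioc (0:ℝ) XM, 0 ≤ deriv (f θ L) X) ∧
      (∀ X ∈ Ico Xm θ, 0 ≤ deriv (f θ L) X) ∧
      (∀ X ∈ Ioo XM Xm, deriv (f θ L) X < 0) ∧
      (∀ X ∈ Ioo (2*θ/5) θ, (deriv (f θ L) X = 0 ↔ X = Xm)) ∧
      (∀ X ∈ Icc (0:ℝ) (max (θ - α^2/L^2) 0),
        (∀ Y ∈ Icc (0:ℝ) (max (θ - α^2/L^2) 0), f θ L X ≤ f θ L Y) →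
        (X = 0 ∨ X = min (max (θ - α^2/L^2) 0) Xm)) :=
  stmt_1_general α θ L hα hθ hL
end

section
/- For every (θ, L) ∈ D_2 ∪ Γ_12, one has θ̃ > 0, f(θ̃) < 0 = f(0), and θ̃ is the unique global minimizer of f on D: f(X) > f(θ̃) for every X ∈ D with X ≠ θ̃. -/
open Real Set

/-!
Write `c = α / L`, so that `θ̃ = θ - c²`, and substitute `X = θ - s²`. For `c < s < √θ`,
`f(X) - f(θ̃) = (s - c) / (c s) · (α g(s) - 1)` with `g(s) = s (s + c) (2θ - c² - s²)`.
The sign of `g'` changes at most once, from `+` to `-`, so inside `[c, √θ]` the quartic `g`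
exceeds the smaller of `g(c) = 4c²θ̃` and `g(√θ) > θ̃²`. The bound `L > L_02(θ)` says exactly
`√α θ̃ > 1`, whence `α g(√θ) > 1` and `f(θ̃) = (1 - α θ̃²) / c < 0`; the two bounds on `L`
together put `L²` between the roots of `L⁴ - 4α³θ L² + 4α⁵`, which is `α g(c) ≥ 1`.
-/

lemma min_lt_of_deriv_single_crossing {g g' : ℝ → ℝ} {a b s : ℝ}
    (hg : ContinuousOn g (Icc a b)) (hg' : ∀ x ∈ Ioo a b, HasDerivAt g (g' x) x)
    (hcross : ∀ x ∈ Ioo a b, ∀ y ∈ Ioo a b, x < y → g' x ≤ 0 → g' y < 0)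
    (hs : s ∈ Ioo a b) : min (g a) (g b) < g s := by
  by_cases hgs : g' s ≤ 0
  · have hanti : StrictAntiOn g (Icc s b) := by
      refine strictAntiOn_of_hasDerivWithinAt_neg (f' := g') (convex_Icc s b)
        (hg.mono (Icc_subset_Icc_left hs.1.le)) (fun t ht => ?_) (fun t ht => ?_)
      all_goals rw [interior_Icc] at ht
      · exact (hg' t ⟨hs.1.trans ht.1, ht.2⟩).hasDerivWithinAt
      · exact hcross s hs t ⟨hs.1.trans ht.1, ht.2⟩ ht.1 hgs
    exact min_lt_of_right_lt (hanti ⟨le_rfl, hs.2.le⟩ ⟨hs.2.le, le_rfl⟩ hs.2)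
  · have hmono : StrictMonoOn g (Icc a s) := by
      refine strictMonoOn_of_hasDerivWithinAt_pos (f' := g') (convex_Icc a s)
        (hg.mono (Icc_subset_Icc_right hs.2.le)) (fun t ht => ?_) (fun t ht => ?_)
      all_goals rw [interior_Icc] at ht
      · exact (hg' t ⟨ht.1, ht.2.trans hs.2⟩).hasDerivWithinAt
      · by_contra! hgt
        exact hgs (hcross t ⟨ht.1, ht.2.trans hs.2⟩ s hs ht.2 hgt).le
    exact min_lt_of_left_lt (hmono ⟨le_rfl, hs.1.le⟩ ⟨hs.1.le, le_rfl⟩ hs.1)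

lemma quartic_deriv_single_crossing {A c x y : ℝ} (hc : 0 ≤ c) (hx : 0 < x) (hxy : x < y)
    (h : A * (2 * x + c) ≤ 4 * x ^ 3 + 3 * c * x ^ 2) :
    A * (2 * y + c) < 4 * y ^ 3 + 3 * c * y ^ 2 := by
  have hy : 0 < y := hx.trans hxy
  -- `(4t³ + 3ct²) / (2t + c)` is strictly increasing on `t > 0`
  have hratio : (4 * x ^ 3 + 3 * c * x ^ 2) * (2 * y + c)
      < (4 * y ^ 3 + 3 * c * y ^ 2) * (2 * x + c) := by
    have hb : 0 < 8 * x * y * (y + x) + 4 * c * (y ^ 2 + x * y + x ^ 2) + 6 * c * x * y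
        + 3 * c ^ 2 * (y + x) := by positivity
    nlinarith [mul_pos (sub_pos.2 hxy) hb]
  have h2x : 0 < 2 * x + c := by linarith
  nlinarith [mul_le_mul_of_nonneg_right h (by linarith : (0:ℝ) ≤ 2 * y + c)]

lemma one_lt_mul_quartic_of_endpoints {k c θ s : ℝ} (hc : 0 < c) (hcs : c < s) (hsθ : s < √θ)
    (h1 : 1 < k * (θ - c ^ 2) ^ 2) (h2 : 1 ≤ 4 * k * c ^ 2 * (θ - c ^ 2)) :
    1 < k * (s * (s + c) * (2 * θ - c ^ 2 - s ^ 2)) := by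
  set g : ℝ → ℝ := fun t => t * (t + c) * (2 * θ - c ^ 2 - t ^ 2)
  have hg' (t : ℝ) : HasDerivAt g
      ((2 * θ - c ^ 2) * (2 * t + c) - (4 * t ^ 3 + 3 * c * t ^ 2)) t := by
    have := ((hasDerivAt_id' t).fun_mul ((hasDerivAt_id' t).add_const c)).fun_mul
      ((hasDerivAt_pow 2 t).const_sub (2 * θ - c ^ 2))
    exact this.congr_deriv (by push_cast; ring)
  have hmin : min (g c) (g √θ) < g s := by
    refine min_lt_of_deriv_single_crossing (by fun_prop) (fun t _ => hg' t)
      (fun x hx y _ hxy hgx => ?_) ⟨hcs, hsθ⟩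
    have := quartic_deriv_single_crossing (A := 2 * θ - c ^ 2) hc.le (hc.trans hx.1) hxy
      (by linarith)
    linarith
  have hθ : 0 < θ := sqrt_pos.1 ((hc.trans hcs).trans hsθ)
  have hθc : 0 < θ - c ^ 2 := by nlinarith [sq_sqrt hθ.le]
  have hk : 0 < k := by nlinarith
  have hgc : g c = 4 * c ^ 2 * (θ - c ^ 2) := by ring
  have hgS : (θ - c ^ 2) ^ 2 < g √θ := by
    have hS := sq_sqrt hθ.le
    have : θ - c ^ 2 < √θ * (√θ + c) := by nlinarith [sqrt_nonneg θ]
    calc (θ - c ^ 2) ^ 2 < √θ * (√θ + c) * (θ - c ^ 2) := by nlinarith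
      _ = g √θ := by simp only [g]; rw [hS]; ring
  calc 1 ≤ k * min (g c) (g √θ) := by
        rw [mul_min_of_nonneg _ _ hk.le]
        exact le_min (by rw [hgc]; linarith) (by nlinarith)
    _ < k * g s := mul_lt_mul_of_pos_left hmin hk

lemma f_sub_sq (θ L : ℝ) {s : ℝ} (hs : 0 < s) (hsθ : s ^ 2 ≠ θ) :
    f θ L (θ - s ^ 2) = s⁻¹ - L * (θ - s ^ 2) ^ 2 := by
  rw [f, if_neg (sub_ne_zero.2 hsθ.symm), sub_sub_cancel, ← rpow_natCast, ← rpow_mul hs.le]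
  norm_num [rpow_neg_one]

lemma f_sub_sq_neg {α θ L c : ℝ} (hc : 0 < c) (hLc : L * c = α)
    (h : 1 < α * (θ - c ^ 2) ^ 2) : f θ L (θ - c ^ 2) < 0 := by
  have hcθ : c ^ 2 ≠ θ := by rintro rfl; norm_num at h
  rw [f_sub_sq θ L hc hcθ, sub_neg, inv_lt_iff_one_lt_mul₀ hc]
  calc 1 < α * (θ - c ^ 2) ^ 2 := h
    _ = L * (θ - c ^ 2) ^ 2 * c := by rw [← hLc]; ring

lemma f_sub_sq_lt {α θ L c X : ℝ} (hc : 0 < c) (hLc : L * c = α)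
    (h1 : 1 < α * (θ - c ^ 2) ^ 2) (h2 : 1 ≤ 4 * α * c ^ 2 * (θ - c ^ 2))
    (hX0 : 0 < X) (hX : X < θ - c ^ 2) : f θ L (θ - c ^ 2) < f θ L X := by
  set s := √(θ - X)
  have hs2 : s ^ 2 = θ - X := sq_sqrt (by nlinarith)
  have hcs : c < s := lt_sqrt_of_sq_lt (by linarith)
  have hsθ : s < √θ := sqrt_lt_sqrt (by nlinarith) (by linarith)
  have hX' : X = θ - s ^ 2 := by linarith
  have hgap := one_lt_mul_quartic_of_endpoints hc hcs hsθ h1 h2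
  have hs : 0 < s := hc.trans hcs
  rw [hX', f_sub_sq θ L hc (by linarith), f_sub_sq θ L hs (by linarith)]
  have hfactor : s⁻¹ - L * (θ - s ^ 2) ^ 2 - (c⁻¹ - L * (θ - c ^ 2) ^ 2)
      = (s - c) / (c * s) * (L * c * (s * (s + c) * (2 * θ - c ^ 2 - s ^ 2)) - 1) := by
    field_simp
    ring
  have : 0 < (s - c) / (c * s) * (L * c * (s * (s + c) * (2 * θ - c ^ 2 - s ^ 2)) - 1) := by
    rw [hLc]
    exact mul_pos (div_pos (by linarith) (by positivity)) (by linarith)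
  linarith

lemma θstar_lt_iff {α θ : ℝ} (hα : 0 < α) : θstar α < θ ↔ 5 / 4 < √α * θ := by
  have hs := sqrt_pos.2 hα
  rw [θstar, show (-(1:ℝ)/2) = -(1/2) by ring, rpow_neg hα.le, ← sqrt_eq_rpow,
    ← div_eq_mul_inv, div_lt_iff₀ hs, mul_comm]

lemma L02_sq {α θ : ℝ} (hα : 0 < α) (hθ : 1 < √α * θ) :
    L02 α θ ^ 2 = √α ^ 5 / (√α * θ - 1) := by
  have hu : 0 < √α * θ - 1 := by linarith
  rw [L02, mul_pow, ← rpow_natCast, ← rpow_natCast _ 2, ← rpow_mul hα.le, ← rpow_mul hu.le,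
    sqrt_eq_rpow, ← rpow_natCast _ 5, ← rpow_mul hα.le]
  norm_num [rpow_neg_one, div_eq_mul_inv]

lemma L12_sq {α θ : ℝ} (hα : 0 < α) (hθ : 1 < √α * θ) :
    L12 α θ ^ 2 = 2 * √α ^ 5 * (√α * θ + √((√α * θ) ^ 2 - 1)) := by
  obtain ⟨r, hr, rfl⟩ : ∃ r, 0 < r ∧ α = r ^ 2 := ⟨√α, sqrt_pos.2 hα, (sq_sqrt hα.le).symm⟩
  rw [sqrt_sq hr.le] at hθ ⊢
  have hinner : r ^ 2 * (r ^ 2 * θ ^ 2 - 1) = r ^ 2 * ((r * θ) ^ 2 - 1) := by ring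
  have hθ0 : 0 < θ := pos_of_mul_pos_right (by linarith) hr.le
  have hw : 0 ≤ (r * θ) ^ 2 - 1 := by nlinarith
  rw [L12, hinner, sqrt_mul (by positivity), sqrt_sq hr.le, sq_sqrt (by positivity)]
  ring

lemma sq_le_four_mul_sub_four {u w l : ℝ} (hu : 1 < u) (hw : 0 ≤ w) (hw2 : w ^ 2 = u ^ 2 - 1)
    (hlow : 1 < l * (u - 1)) (hup : l ≤ 2 * (u + w)) : l ^ 2 ≤ 4 * u * l - 4 := by
  -- the roots of `l² - 4ul + 4` are `2(u ± w)`, and `1 / (u - 1) ≥ 2(u - w)` since `w ≥ u - 2`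
  have hw' : u - 2 ≤ w := by
    rcases le_or_gt u 2 with h | h
    · linarith
    · nlinarith
  have huw : 0 < u - w := by nlinarith
  have hroot : 2 * (u - w) * (u - 1) ≤ 1 := by
    nlinarith [mul_le_mul_of_nonneg_left hw' huw.le]
  have hlow' : 2 * (u - w) ≤ l := le_of_mul_le_mul_right (by linarith) (by linarith : 0 < u - 1)
  nlinarith [mul_nonneg (sub_nonneg.2 hlow') (sub_nonneg.2 hup)]

lemma L02_pos {α θ : ℝ} (hα : 0 < α) (hθ : 1 < √α * θ) : 0 < L02 α θ := by
  have hu : 0 < √α * θ - 1 := by linarith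
  unfold L02; positivity

lemma one_lt_sqrt_mul_of_L02_lt {α θ L : ℝ} (hα : 0 < α) (hθ : 1 < √α * θ) (hL : L02 α θ < L) :
    1 < √α * (θ - α ^ 2 / L ^ 2) := by
  have hL0 := (L02_pos hα hθ).trans hL
  have hsq := pow_lt_pow_left₀ hL (L02_pos hα hθ).le two_ne_zero
  rw [L02_sq hα hθ, div_lt_iff₀ (by linarith)] at hsq
  obtain ⟨r, hr, rfl⟩ : ∃ r, 0 < r ∧ α = r ^ 2 := ⟨√α, sqrt_pos.2 hα, (sq_sqrt hα.le).symm⟩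
  rw [sqrt_sq hr.le] at hsq ⊢
  have : r * ((r ^ 2) ^ 2 / L ^ 2) < r * θ - 1 := by
    rw [← mul_div_assoc, div_lt_iff₀ (by positivity)]; linarith
  linarith

lemma one_le_of_L02_lt_of_le_L12 {α θ L : ℝ} (hα : 0 < α) (hθ : 1 < √α * θ)
    (hlow : L02 α θ < L) (hup : L ≤ L12 α θ) :
    1 ≤ 4 * α * (α ^ 2 / L ^ 2) * (θ - α ^ 2 / L ^ 2) := by
  have hL := (L02_pos hα hθ).trans hlow
  have hlow2 := pow_lt_pow_left₀ hlow (L02_pos hα hθ).le two_ne_zero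
  have hup2 := pow_le_pow_left₀ hL.le hup 2
  rw [L02_sq hα hθ, div_lt_iff₀ (by linarith)] at hlow2
  rw [L12_sq hα hθ] at hup2
  obtain ⟨r, hr, rfl⟩ : ∃ r, 0 < r ∧ α = r ^ 2 := ⟨√α, sqrt_pos.2 hα, (sq_sqrt hα.le).symm⟩
  rw [sqrt_sq hr.le] at hθ hlow2 hup2
  have key := sq_le_four_mul_sub_four (l := L ^ 2 / r ^ 5) hθ (sqrt_nonneg _)
    (sq_sqrt (by nlinarith)) (by rw [div_mul_eq_mul_div, one_lt_div (by positivity)]; linarith)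
    (by rw [div_le_iff₀ (by positivity)]; linarith)
  have e : 4 * r ^ 2 * ((r ^ 2) ^ 2 / L ^ 2) * (θ - (r ^ 2) ^ 2 / L ^ 2) - 1
      = (4 * (r * θ) * (L ^ 2 / r ^ 5) - 4 - (L ^ 2 / r ^ 5) ^ 2) / (L ^ 2 / r ^ 5) ^ 2 := by
    field_simp
  have : 0 ≤ (4 * (r * θ) * (L ^ 2 / r ^ 5) - 4 - (L ^ 2 / r ^ 5) ^ 2) / (L ^ 2 / r ^ 5) ^ 2 :=
    div_nonneg (by linarith) (sq_nonneg _)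
  linarith

/-- For `(θ, L) ∈ D_2 ∪ Γ_12` (i.e. `θ > θ*` and `L_02(θ) < L ≤ L_12(θ)`):
`θ̃ > 0`, `f(θ̃) < 0 = f(0)`, and `θ̃` is the unique global minimizer of `f` on `D`:
`f(X) > f(θ̃)` for every `X ∈ D` with `X ≠ θ̃`. -/
theorem stmt_16 (α θ L : ℝ) (hα : 0 < α) (hθ : θstar α < θ)
    (hD : L02 α θ < L ∧ L ≤ L12 α θ) :
    0 < θ - α^2/L^2 ∧
    f θ L (θ - α^2/L^2) < 0 ∧ f θ L 0 = 0 ∧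
    (∀ X ∈ Icc (0:ℝ) (max (θ - α^2/L^2) 0), X ≠ θ - α^2/L^2 →
      f θ L (θ - α^2/L^2) < f θ L X) := by
  have hu : 1 < √α * θ := by linarith [(θstar_lt_iff hα).1 hθ]
  have hL : 0 < L := (L02_pos hα hu).trans hD.1
  have hθt := one_lt_sqrt_mul_of_L02_lt hα hu hD.1
  have hgc := one_le_of_L02_lt_of_le_L12 hα hu hD.1 hD.2
  rw [← div_pow] at hθt hgc ⊢
  set c := α / L
  have hc : 0 < c := div_pos hα hL
  have hLc : L * c = α := mul_div_cancel₀ α hL.ne'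
  have hpos : 0 < θ - c ^ 2 := pos_of_mul_pos_right (by linarith) (sqrt_nonneg α)
  have hgS : 1 < α * (θ - c ^ 2) ^ 2 := by
    nlinarith [sq_sqrt hα.le]
  have hneg := f_sub_sq_neg hc hLc hgS
  refine ⟨hpos, hneg, if_pos rfl, fun X ⟨hX0, hX⟩ hXne => ?_⟩
  rw [max_eq_left hpos.le] at hX
  rcases hX0.eq_or_lt with rfl | hX0
  · rwa [show f θ L 0 = 0 from if_pos rfl]
  · exact f_sub_sq_lt hc hLc hgS (by linarith) hX0 (hX.lt_of_ne hXne)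
end

section
/- For every (θ, L) ∈ Γ_01 ∪ Γ_02 ∪ {P}, the function f has exactly two global minimizers on D, namely 0 and a point X̄ > 0 with f(X̄) = 0 = f(0); moreover X̄ = X_m(θ, L) = 4θ/5 < θ̃ when (θ, L) ∈ Γ_01, X̄ = θ̃ = α^(−1/2) < X_m(θ, L) when (θ, L) ∈ Γ_02, and X̄ = X_m(θ, L) = θ̃ when (θ, L) = P. -/
open Real Set

lemma rpow_neg_half' (u : ℝ) (hu : 0 < u) : u ^ (-(1:ℝ)/2) = (Real.sqrt u)⁻¹ := by
  rw [Real.sqrt_eq_rpow, ← Real.rpow_neg hu.le]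
  norm_num

lemma rpow_sq' {x : ℝ} (hx : 0 ≤ x) (r : ℝ) : (x ^ r)^2 = x ^ (2*r) := by
  rw [← Real.rpow_natCast (x ^ r) 2, ← Real.rpow_mul hx]
  norm_num [mul_comm]

lemma five_pow' : ((5:ℝ) ^ ((5:ℝ)/2))^2 = 3125 := by
  rw [rpow_sq' (by norm_num : (0:ℝ) ≤ 5)]
  rw [show (2:ℝ)*((5:ℝ)/2) = ((5:ℕ):ℝ) by norm_num, Real.rpow_natCast]
  norm_num

lemma L01_sq (θ : ℝ) (hθ : 0 < θ) : (L01 θ)^2 * θ^5 = 3125/256 := by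
  unfold L01
  rw [mul_pow, div_pow, five_pow', rpow_sq' hθ.le]
  rw [show (2:ℝ)*(-(5:ℝ)/2) = -((5:ℕ):ℝ) by norm_num, Real.rpow_neg hθ.le, Real.rpow_natCast]
  field_simp
  ring

lemma L01_pos (θ : ℝ) (hθ : 0 < θ) : 0 < L01 θ := by
  unfold L01
  positivity

lemma f_sign (θ L X : ℝ) (hL : 0 < L) (hX : 0 < X) (hXθ : X < θ) :
    (0 ≤ f θ L X ↔ L^2 * (X^4 * (θ - X)) ≤ 1) ∧ (f θ L X = 0 ↔ L^2 * (X^4 * (θ - X)) = 1) := by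
  have hu : 0 < θ - X := by linarith
  have hsu : 0 < Real.sqrt (θ - X) := Real.sqrt_pos.2 hu
  have hsq : Real.sqrt (θ - X) ^ 2 = θ - X := Real.sq_sqrt hu.le
  have hf : f θ L X = (Real.sqrt (θ - X))⁻¹ - L * X ^ 2 := by
    rw [f, if_neg hX.ne', rpow_neg_half' _ hu]
  have ha : 0 < L * X^2 * Real.sqrt (θ - X) := by positivity
  have ha2 : (L * X^2 * Real.sqrt (θ - X))^2 = L^2 * (X^4 * (θ - X)) := by
    rw [mul_pow, mul_pow, hsq]; ring
  constructor
  · constructor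
    · intro h
      have h1 : L * X^2 ≤ (Real.sqrt (θ - X))⁻¹ := by rw [hf] at h; linarith
      have h2 : L * X^2 * Real.sqrt (θ - X) ≤ 1 := by
        rw [inv_eq_one_div, le_div_iff₀ hsu] at h1; linarith
      nlinarith
    · intro h
      have h2 : L * X^2 * Real.sqrt (θ - X) ≤ 1 := by nlinarith
      have h1 : L * X^2 ≤ (Real.sqrt (θ - X))⁻¹ := by
        rw [inv_eq_one_div, le_div_iff₀ hsu]; linarith
      rw [hf]; linarith
  · constructor
    · intro h
      have h1 : L * X^2 = (Real.sqrt (θ - X))⁻¹ := by rw [hf] at h; linarith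
      have h2 : L * X^2 * Real.sqrt (θ - X) = 1 := by
        rw [h1, inv_mul_cancel₀ hsu.ne']
      nlinarith
    · intro h
      have h2 : L * X^2 * Real.sqrt (θ - X) = 1 := by nlinarith
      have h1 : L * X^2 = (Real.sqrt (θ - X))⁻¹ := by
        field_simp at h2 ⊢
        linarith
      rw [hf, h1]; ring

lemma xm_eq (θ L X : ℝ) (hL : 0 < L) (hX : 0 < X) (hXθ : X < θ)
    (h : 16 * (L^2 * (X^2 * (θ - X)^3)) = 1) :
    (1/2) * (θ - X) ^ (-(3:ℝ)/2) = 2 * L * X := by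
  have hu : 0 < θ - X := by linarith
  have h1 : (θ - X) ^ (-(3:ℝ)/2) = (Real.sqrt ((θ-X)^3))⁻¹ := by
    rw [show (-(3:ℝ)/2) = ((3:ℕ):ℝ) * (-(1:ℝ)/2) by norm_num, Real.rpow_mul hu.le,
      Real.rpow_natCast, rpow_neg_half' _ (by positivity)]
  set w := Real.sqrt ((θ-X)^3) with hw
  have hwpos : 0 < w := Real.sqrt_pos.2 (by positivity)
  have hw2 : w^2 = (θ-X)^3 := Real.sq_sqrt (by positivity)
  have h2 : (4*L*X*w)^2 = 1 := by
    have : (4*L*X*w)^2 = 16*(L^2*(X^2*w^2)) := by ring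
    rw [this, hw2]; linarith [h]
  have h3 : 4*L*X*w = 1 := by
    nlinarith [mul_pos (mul_pos (mul_pos (by norm_num : (0:ℝ)<4) hL) hX) hwpos]
  rw [h1]
  field_simp
  linarith

lemma caseA_nonneg (θ X : ℝ) (hθ : 0 < θ) (hX : 0 ≤ X) :
    3125 * (X^4*(θ-X)) ≤ 256 * θ^5 := by
  nlinarith [mul_nonneg (sq_nonneg (5*X-4*θ))
    (show (0:ℝ) ≤ 125*X^3+75*θ*X^2+40*θ^2*X+16*θ^3 by positivity)]

lemma caseA_eqq (θ X : ℝ) (hθ : 0 < θ) (hX : 0 ≤ X)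
    (h : 3125 * (X^4*(θ-X)) = 256 * θ^5) : X = 4*θ/5 := by
  have hq : 0 < 125*X^3+75*θ*X^2+40*θ^2*X+16*θ^3 := by positivity
  have h2 : (5*X-4*θ)^2 * (125*X^3+75*θ*X^2+40*θ^2*X+16*θ^3) = 0 := by linear_combination -h
  rcases mul_eq_zero.mp h2 with h3 | h3
  · have := pow_eq_zero_iff (n := 2) (by norm_num) |>.mp h3
    linarith
  · linarith

lemma caseB_B_pos (t v : ℝ) (ht : 5/4 < t) (hv0 : 0 ≤ v) (hv1 : v ≤ 1) :
    0 < (t-1)*(1+v+v^2+v^3) - v^4 := by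
  nlinarith [mul_nonneg hv0 (sub_nonneg.2 (pow_le_one₀ hv0 hv1 (n:=3))),
    mul_nonneg (pow_nonneg hv0 2) (sub_nonneg.2 (pow_le_one₀ hv0 hv1 (n:=2))),
    mul_nonneg (pow_nonneg hv0 3) (sub_nonneg.2 hv1),
    pow_le_one₀ hv0 hv1 (n:=4),
    mul_lt_mul_of_pos_right (show 1/4 < t-1 by linarith)
      (show (0:ℝ) < 1+v+v^2+v^3 by positivity)]

lemma caseB_nonneg (t v : ℝ) (ht : 5/4 < t) (hv0 : 0 ≤ v) (hv1 : v ≤ 1) :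
    v^4 * (t - v) ≤ t - 1 := by
  nlinarith [mul_nonneg (sub_nonneg.2 hv1) (caseB_B_pos t v ht hv0 hv1).le]

lemma caseB_eqq (t v : ℝ) (ht : 5/4 < t) (hv0 : 0 ≤ v) (hv1 : v ≤ 1)
    (h : v^4*(t-v) = t-1) : v = 1 := by
  have hB := caseB_B_pos t v ht hv0 hv1
  have h2 : (1-v) * ((t-1)*(1+v+v^2+v^3) - v^4) = 0 := by linear_combination -h
  rcases mul_eq_zero.mp h2 with h3 | h3
  · linarith
  · linarith

lemma ivt_bound (t : ℝ) (ht : 5/4 < t) : 3125 * (t-1) < 1728 * t^5 := by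
  nlinarith [pow_pos (by linarith : (0:ℝ) < t) 3, pow_pos (by linarith : (0:ℝ) < t) 4,
    sq_nonneg (t - 5/4), sq_nonneg (2*t-5/2),
    mul_pos (by linarith : (0:ℝ) < t) (by linarith : (0:ℝ) < t)]

set_option maxHeartbeats 1600000 in
lemma case_A (α θ L : ℝ) (s : ℝ) (hα : 0 < α) (hs : 0 < s) (hsa : s^2 = α)
    (hθ : 0 < θ) (hts : s*θ ≤ 5/4) (hLe : L = L01 θ) :
    ∃ Xbar : ℝ, 0 < Xbar ∧ Xbar ∈ Icc (0:ℝ) (max (θ - α^2/L^2) 0) ∧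
      f θ L Xbar = 0 ∧ f θ L 0 = 0 ∧
      (∀ X ∈ Icc (0:ℝ) (max (θ - α^2/L^2) 0), 0 ≤ f θ L X) ∧
      (∀ X ∈ Icc (0:ℝ) (max (θ - α^2/L^2) 0), f θ L X = 0 → X = 0 ∨ X = Xbar) ∧
      ((0 < θ ∧ θ < θstar α ∧ L = L01 θ) →
        Xbar = 4*θ/5 ∧ Xbar < θ - α^2/L^2 ∧
        Xbar ∈ Ioo (2*θ/5) θ ∧ (1/2) * (θ - Xbar) ^ (-(3:ℝ)/2) = 2 * L * Xbar) ∧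
      ((θstar α < θ ∧ L = L02 α θ) →
        Xbar = θ - α^2/L^2 ∧ Xbar = α ^ (-(1:ℝ)/2) ∧
        ∃ Xm ∈ Ioo (2*θ/5) θ,
          (1/2) * (θ - Xm) ^ (-(3:ℝ)/2) = 2 * L * Xm ∧ Xbar < Xm) ∧
      ((θ = θstar α ∧ L = L01 (θstar α)) →
        Xbar = θ - α^2/L^2 ∧
        Xbar ∈ Ioo (2*θ/5) θ ∧ (1/2) * (θ - Xbar) ^ (-(3:ℝ)/2) = 2 * L * Xbar) := by
  have hsqrtα : Real.sqrt α = s := by rw [← hsa, Real.sqrt_sq hs.le]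
  have hαinv : α ^ (-(1:ℝ)/2) = s⁻¹ := by rw [rpow_neg_half' α hα, hsqrtα]
  have hθstar : θstar α = (5/4) * s⁻¹ := by rw [θstar, hαinv]
  have hL : 0 < L := by rw [hLe]; exact L01_pos θ hθ
  have hL2 : L^2 * θ^5 = 3125/256 := by rw [hLe]; exact L01_sq θ hθ
  have hL2' : L^2 = 3125/(256*θ^5) := by
    rw [eq_div_iff (by positivity : (256:ℝ)*θ^5 ≠ 0)]
    linear_combination 256*hL2
  have hiv : α^2/L^2 = 256*(s^4*θ^5)/3125 := by
    rw [hL2', ← hsa]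
    field_simp
  have hts4 : s^4*θ^4 ≤ 625/256 := by
    have h := pow_le_pow_left₀ (mul_nonneg hs.le hθ.le) hts 4
    nlinarith [h]
  have htle : α^2/L^2 ≤ θ/5 := by
    rw [hiv]; nlinarith [hts4, hθ]
  have htpos : 0 < θ - α^2/L^2 := by linarith
  have htlt : θ - α^2/L^2 < θ := by
    have : (0:ℝ) < α^2/L^2 := by positivity
    linarith
  have hmax : max (θ - α^2/L^2) 0 = θ - α^2/L^2 := max_eq_left htpos.le
  rw [hmax]
  refine ⟨4*θ/5, by linarith, ⟨by linarith, by linarith⟩, ?_, by simp [f], ?_, ?_, ?_, ?_, ?_⟩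
  · exact (f_sign θ L _ hL (by linarith) (by linarith)).2.mpr
      (by linear_combination (256/3125) * hL2)
  · rintro X ⟨hX0, hX1⟩
    rcases eq_or_lt_of_le hX0 with h0 | h0
    · simp [f, ← h0]
    · refine (f_sign θ L X hL h0 (by linarith)).1.mpr ?_
      nlinarith [mul_le_mul_of_nonneg_left (caseA_nonneg θ X hθ hX0) (sq_nonneg L), hL2]
  · rintro X ⟨hX0, hX1⟩ hfX
    rcases eq_or_lt_of_le hX0 with h0 | h0
    · exact Or.inl h0.symm
    · right
      have hm := (f_sign θ L X hL h0 (by linarith)).2.mp hfX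
      rw [hL2'] at hm
      field_simp at hm
      exact caseA_eqq θ X hθ hX0 (by linear_combination hm)
  · rintro ⟨-, hlt, -⟩
    have hts' : s*θ < 5/4 := by
      rw [hθstar] at hlt
      nlinarith [mul_lt_mul_of_pos_left hlt hs, mul_inv_cancel₀ hs.ne']
    have h4 : s^4*θ^4 < 625/256 := by
      have h := pow_lt_pow_left₀ hts' (mul_nonneg hs.le hθ.le) (by norm_num : 4 ≠ 0)
      nlinarith [h]
    have h5 : α^2/L^2 < θ/5 := by rw [hiv]; nlinarith [hθ]
    refine ⟨rfl, by linarith, ⟨by linarith, by linarith⟩, ?_⟩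
    exact xm_eq θ L _ hL (by linarith) (by linarith)
      (by linear_combination (256/3125) * hL2)
  · rintro ⟨hlt, -⟩
    exfalso
    rw [hθstar] at hlt
    nlinarith [mul_lt_mul_of_pos_left hlt hs, mul_inv_cancel₀ hs.ne']
  · rintro ⟨heq, -⟩
    have hts' : s*θ = 5/4 := by
      rw [heq, hθstar]
      field_simp
    have h4 : s^4*θ^4 = 625/256 := by
      linear_combination (s*θ+5/4)*(s^2*θ^2+25/16)*hts'
    have h5 : α^2/L^2 = θ/5 := by
      rw [hiv]
      linear_combination (256/3125)*θ*h4
    refine ⟨by linarith, ⟨by linarith, by linarith⟩, ?_⟩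
    exact xm_eq θ L _ hL (by linarith) (by linarith)
      (by linear_combination (256/3125) * hL2)

set_option maxHeartbeats 1600000 in
lemma case_B (α θ L : ℝ) (s : ℝ) (hα : 0 < α) (hs : 0 < s) (hsa : s^2 = α)
    (hθs : θstar α < θ) (hLe : L = L02 α θ) :
    ∃ Xbar : ℝ, 0 < Xbar ∧ Xbar ∈ Icc (0:ℝ) (max (θ - α^2/L^2) 0) ∧
      f θ L Xbar = 0 ∧ f θ L 0 = 0 ∧
      (∀ X ∈ Icc (0:ℝ) (max (θ - α^2/L^2) 0), 0 ≤ f θ L X) ∧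
      (∀ X ∈ Icc (0:ℝ) (max (θ - α^2/L^2) 0), f θ L X = 0 → X = 0 ∨ X = Xbar) ∧
      ((0 < θ ∧ θ < θstar α ∧ L = L01 θ) →
        Xbar = 4*θ/5 ∧ Xbar < θ - α^2/L^2 ∧
        Xbar ∈ Ioo (2*θ/5) θ ∧ (1/2) * (θ - Xbar) ^ (-(3:ℝ)/2) = 2 * L * Xbar) ∧
      ((θstar α < θ ∧ L = L02 α θ) →
        Xbar = θ - α^2/L^2 ∧ Xbar = α ^ (-(1:ℝ)/2) ∧
        ∃ Xm ∈ Ioo (2*θ/5) θ,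
          (1/2) * (θ - Xm) ^ (-(3:ℝ)/2) = 2 * L * Xm ∧ Xbar < Xm) ∧
      ((θ = θstar α ∧ L = L01 (θstar α)) →
        Xbar = θ - α^2/L^2 ∧
        Xbar ∈ Ioo (2*θ/5) θ ∧ (1/2) * (θ - Xbar) ^ (-(3:ℝ)/2) = 2 * L * Xbar) := by
  have hsqrtα : Real.sqrt α = s := by rw [← hsa, Real.sqrt_sq hs.le]
  have hαinv : α ^ (-(1:ℝ)/2) = s⁻¹ := by rw [rpow_neg_half' α hα, hsqrtα]
  have hθstar : θstar α = (5/4) * s⁻¹ := by rw [θstar, hαinv]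
  have hθ : 0 < θ := lt_trans (by rw [hθstar]; positivity) hθs
  have ht : 5/4 < s*θ := by
    rw [hθstar] at hθs
    nlinarith [mul_lt_mul_of_pos_left hθs hs, mul_inv_cancel₀ hs.ne']
  have hs1 : 0 < s*θ - 1 := by linarith
  have hLf : L = α^((5:ℝ)/4) * (s*θ - 1)^(-(1:ℝ)/2) := by rw [hLe, L02, hsqrtα]
  have hL : 0 < L := by
    rw [hLf]
    have h1 : (0:ℝ) < α^((5:ℝ)/4) := Real.rpow_pos_of_pos hα _
    have h2 : (0:ℝ) < (s*θ - 1)^(-(1:ℝ)/2) := Real.rpow_pos_of_pos hs1 _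
    positivity
  have hα52 : α ^ ((5:ℝ)/2) = s^5 := by
    rw [← hsa, ← Real.rpow_natCast s 2, ← Real.rpow_mul hs.le]
    rw [show ((2:ℕ):ℝ) * ((5:ℝ)/2) = ((5:ℕ):ℝ) by norm_num, Real.rpow_natCast]
  have hL2 : L^2 * (s*θ - 1) = s^5 := by
    rw [hLf, mul_pow, rpow_sq' hα.le, rpow_sq' hs1.le]
    rw [show (2:ℝ)*(-(1:ℝ)/2) = -1 by norm_num, Real.rpow_neg_one]
    rw [show (2:ℝ)*((5:ℝ)/4) = (5:ℝ)/2 by norm_num, hα52]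
    field_simp
  have hL2' : L^2 = s^5/(s*θ-1) := by
    rw [eq_div_iff hs1.ne']; exact hL2
  have hXb : θ - α^2/L^2 = s⁻¹ := by
    rw [hL2', ← hsa]
    rw [div_div_eq_mul_div]
    field_simp
    ring
  have hXbpos : 0 < θ - α^2/L^2 := by rw [hXb]; positivity
  have hsinvθ : s⁻¹ < θ := by
    nlinarith [mul_inv_cancel₀ hs.ne', ht, hs]
  have hmax : max (θ - α^2/L^2) 0 = θ - α^2/L^2 := max_eq_left hXbpos.le
  rw [hmax]
  refine ⟨θ - α^2/L^2, hXbpos, ⟨hXbpos.le, le_refl _⟩, ?_, by simp [f], ?_, ?_, ?_, ?_, ?_⟩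
  · rw [hXb]
    refine (f_sign θ L s⁻¹ hL (by positivity) hsinvθ).2.mpr ?_
    rw [hL2']
    field_simp
  · rintro X ⟨hX0, hX1⟩
    rcases eq_or_lt_of_le hX0 with h0 | h0
    · simp [f, ← h0]
    · rw [hXb] at hX1
      have hXs : s*X ≤ 1 := by
        have h := mul_le_mul_of_nonneg_left hX1 hs.le
        rwa [mul_inv_cancel₀ hs.ne'] at h
      have hXθ : X < θ := lt_of_le_of_lt hX1 hsinvθ
      refine (f_sign θ L X hL h0 hXθ).1.mpr ?_
      have hb := caseB_nonneg (s*θ) (s*X) ht (by positivity) hXs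
      rw [hL2', div_mul_eq_mul_div, div_le_one hs1]
      nlinarith [hb]
  · rintro X ⟨hX0, hX1⟩ hfX
    rcases eq_or_lt_of_le hX0 with h0 | h0
    · exact Or.inl h0.symm
    · right
      rw [hXb] at hX1 ⊢
      have hXs : s*X ≤ 1 := by
        have h := mul_le_mul_of_nonneg_left hX1 hs.le
        rwa [mul_inv_cancel₀ hs.ne'] at h
      have hXθ : X < θ := lt_of_le_of_lt hX1 hsinvθ
      have hm := (f_sign θ L X hL h0 hXθ).2.mp hfX
      rw [hL2', div_mul_eq_mul_div, div_eq_one_iff_eq hs1.ne'] at hm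
      have hv : (s*X)^4*((s*θ) - s*X) = s*θ - 1 := by linear_combination hm
      have h1 := caseB_eqq (s*θ) (s*X) ht (by positivity) hXs hv
      field_simp
      linarith [h1]
  · rintro ⟨-, hlt, -⟩
    exfalso
    linarith
  · rintro ⟨-, -⟩
    refine ⟨rfl, by rw [hXb, hαinv], ?_⟩
    have h2θ5 : (0:ℝ) < 2*θ/5 := by linarith
    have haθ : max (2*θ/5) s⁻¹ ≤ θ := max_le (by linarith) hsinvθ.le
    have hcont : ContinuousOn (fun x : ℝ => 16*(L^2*(x^2*(θ-x)^3))) (Icc (max (2*θ/5) s⁻¹) θ) := by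
      apply Continuous.continuousOn
      continuity
    have key : ∀ x : ℝ, s*θ-1 < 16*(s^5*(x^2*(θ-x)^3)) → 1 < 16*(L^2*(x^2*(θ-x)^3)) := by
      intro x hx
      have he : 16*(L^2*(x^2*(θ-x)^3)) = 16*(s^5*(x^2*(θ-x)^3))/(s*θ-1) := by
        rw [hL2']; ring
      rw [he, lt_div_iff₀ hs1, one_mul]
      exact hx
    have hga : 1 < 16*(L^2*((max (2*θ/5) s⁻¹)^2*(θ-(max (2*θ/5) s⁻¹))^3)) := by
      rcases max_choice (2*θ/5) s⁻¹ with hm | hm <;> rw [hm]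
      · apply key
        nlinarith [ivt_bound (s*θ) ht]
      · apply key
        have he : 16*(s^5*((s⁻¹)^2*(θ-s⁻¹)^3)) = 16*(s*θ-1)^3 := by
          field_simp
        rw [he]
        nlinarith [mul_pos (mul_pos hs1 (show (0:ℝ) < 4*(s*θ-1)-1 by linarith))
          (show (0:ℝ) < 4*(s*θ-1)+1 by linarith)]
    have hmem : (1:ℝ) ∈ Icc (16*(L^2*((θ:ℝ)^2*(θ-θ)^3)) )
        (16*(L^2*((max (2*θ/5) s⁻¹)^2*(θ-(max (2*θ/5) s⁻¹))^3))) := by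
      constructor
      · simp
      · exact hga.le
    obtain ⟨Xm, hXmIcc, hgXm⟩ := intermediate_value_Icc' haθ hcont hmem
    simp only at hgXm
    have hXma : Xm ≠ max (2*θ/5) s⁻¹ := by
      rintro rfl
      rw [hgXm] at hga
      exact lt_irrefl _ hga
    have hXmθ : Xm ≠ θ := by
      rintro rfl
      rw [sub_self] at hgXm
      norm_num at hgXm
    have hXm1 : max (2*θ/5) s⁻¹ < Xm := lt_of_le_of_ne hXmIcc.1 (Ne.symm hXma)
    have hXm2 : Xm < θ := lt_of_le_of_ne hXmIcc.2 hXmθ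
    have hXm0 : 0 < Xm := lt_trans (lt_of_lt_of_le h2θ5 (le_max_left _ _)) hXm1
    refine ⟨Xm, ⟨lt_of_le_of_lt (le_max_left _ _) hXm1, hXm2⟩, ?_, ?_⟩
    · exact xm_eq θ L Xm hL hXm0 hXm2 hgXm
    · rw [hXb]
      exact lt_of_le_of_lt (le_max_right _ _) hXm1
  · rintro ⟨heq, -⟩
    exfalso
    rw [heq] at hθs
    exact lt_irrefl _ hθs

/-- For `(θ, L) ∈ Γ_01 ∪ Γ_02 ∪ {P}`, the function `f` has exactly two global
minimizers on `D`, namely `0` and a point `X̄ > 0` with `f(X̄) = 0 = f(0)`; moreover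
`X̄ = X_m(θ, L) = 4θ/5 < θ̃` on `Γ_01`, `X̄ = θ̃ = α^(-1/2) < X_m(θ, L)` on `Γ_02`, and
`X̄ = X_m(θ, L) = θ̃` at `P`. Here `X_m(θ, L)` is the unique point of `(2θ/5, θ)` satisfying
`(1/2)(θ - X)^(-3/2) = 2LX`. -/
theorem stmt_17 (α θ L : ℝ) (hα : 0 < α)
    (hΓ : (0 < θ ∧ θ < θstar α ∧ L = L01 θ) ∨ (θstar α < θ ∧ L = L02 α θ) ∨
          (θ = θstar α ∧ L = L01 (θstar α))) :
    ∃ Xbar : ℝ, 0 < Xbar ∧ Xbar ∈ Icc (0:ℝ) (max (θ - α^2/L^2) 0) ∧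
      f θ L Xbar = 0 ∧ f θ L 0 = 0 ∧
      (∀ X ∈ Icc (0:ℝ) (max (θ - α^2/L^2) 0), 0 ≤ f θ L X) ∧
      (∀ X ∈ Icc (0:ℝ) (max (θ - α^2/L^2) 0), f θ L X = 0 → X = 0 ∨ X = Xbar) ∧
      ((0 < θ ∧ θ < θstar α ∧ L = L01 θ) →
        Xbar = 4*θ/5 ∧ Xbar < θ - α^2/L^2 ∧
        Xbar ∈ Ioo (2*θ/5) θ ∧ (1/2) * (θ - Xbar) ^ (-(3:ℝ)/2) = 2 * L * Xbar) ∧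
      ((θstar α < θ ∧ L = L02 α θ) →
        Xbar = θ - α^2/L^2 ∧ Xbar = α ^ (-(1:ℝ)/2) ∧
        ∃ Xm ∈ Ioo (2*θ/5) θ,
          (1/2) * (θ - Xm) ^ (-(3:ℝ)/2) = 2 * L * Xm ∧ Xbar < Xm) ∧
      ((θ = θstar α ∧ L = L01 (θstar α)) →
        Xbar = θ - α^2/L^2 ∧
        Xbar ∈ Ioo (2*θ/5) θ ∧ (1/2) * (θ - Xbar) ^ (-(3:ℝ)/2) = 2 * L * Xbar) := by
  have hs : 0 < Real.sqrt α := Real.sqrt_pos.2 hα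
  have hsa : (Real.sqrt α)^2 = α := Real.sq_sqrt hα.le
  have hθstar : θstar α = (5/4) * (Real.sqrt α)⁻¹ := by
    rw [θstar, rpow_neg_half' α hα]
  rcases hΓ with ⟨hθ, hθs, hLe⟩ | ⟨hθs, hLe⟩ | ⟨hθe, hLe⟩
  · refine case_A α θ L (Real.sqrt α) hα hs hsa hθ ?_ hLe
    rw [hθstar] at hθs
    nlinarith [mul_lt_mul_of_pos_left hθs hs, mul_inv_cancel₀ hs.ne']
  · exact case_B α θ L (Real.sqrt α) hα hs hsa hθs hLe
  · have hθ : 0 < θ := by rw [hθe, hθstar]; positivity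
    have hLe' : L = L01 θ := by rw [hθe]; exact hLe
    refine case_A α θ L (Real.sqrt α) hα hs hsa hθ ?_ hLe'
    rw [hθe, hθstar]
    have : Real.sqrt α * (5/4 * (Real.sqrt α)⁻¹) = 5/4 := by
      field_simp
    linarith [this.le]
end

section
/- Let c > 0 and x₀ < y₀, and suppose ζ : [x₀, y₀] → ℝ is C¹ on [x₀, y₀] and C⁴ on (x₀, y₀), satisfies ζ⁗(x) + c·ζ″(x) = 0 for all x ∈ (x₀, y₀), is strictly positive on (x₀, y₀), and satisfies ζ(x₀) = ζ(y₀) = 0 and ζ′(x₀) = ζ′(y₀) = 0. Then, with β := √c, the length of the interval is y₀ − x₀ = 2π/β, and there exists a constant A₀ > 0 such that ζ(x) = A₀·(cos(β·(x − m)) + 1) for all x ∈ [x₀, y₀], where m := (x₀ + y₀)/2 is the midpoint of the interval. -/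
/-!
On the open interval every solution of `ζ⁗ + β² ζ″ = 0` (with `β = √c`) is of the form
`A cos(β(x - m)) + B sin(β(x - m)) + D(x - m) + E`: the difference with the member of this family
matching `ζ, ζ', ζ'', ζ'''` at `m` has vanishing data at `m`, and the energy `w'''² + c w''²` of
that difference is constant, hence zero. Continuity carries the formula and its derivative to the
endpoints, where the four boundary conditions, split into their even and odd parts about `m`, force
`A sin θ = 0`, `E = -A cos θ`, `B sin θ + D L = 0`, `B β cos θ + D = 0` with `L = (y₀ - x₀)/2` and
`θ = β L`. Positivity at `m` gives `A (1 - cos θ) > 0`, so `sin θ = 0` and `cos θ = -1`, whence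
`B = D = 0`, `E = A > 0`; positivity at `m + π/β` rules out `θ > π`.
-/

open Real Set

theorem ContDiffOn.hasDerivAt_iteratedDeriv {s : Set ℝ} (hs : IsOpen s) {f : ℝ → ℝ} {n k : ℕ}
    (hf : ContDiffOn ℝ n f s) (hk : k < n) {x : ℝ} (hx : x ∈ s) :
    HasDerivAt (iteratedDeriv k f) (iteratedDeriv (k + 1) f x) x := by
  induction k generalizing f n with
  | zero =>
    rw [iteratedDeriv_zero, iteratedDeriv_one]
    have hdiff := hf.differentiableOn (by exact_mod_cast Nat.one_le_iff_ne_zero.mp hk)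
    exact ((hdiff x hx).differentiableAt (hs.mem_nhds hx)).hasDerivAt
  | succ k ih =>
    obtain ⟨n, rfl⟩ : ∃ n', n = n' + 1 := ⟨n - 1, by omega⟩
    rw [iteratedDeriv_succ' (n := k), iteratedDeriv_succ' (n := k + 1)]
    exact ih (hf.deriv_of_isOpen hs (by norm_cast)) (by omega)

theorem IsOpen.eqOn_zero_of_hasDerivAt {s : Set ℝ} (hs : IsOpen s) (hs' : IsPreconnected s)
    {f f' : ℝ → ℝ} (hf : ∀ x ∈ s, HasDerivAt f (f' x) x) (hf' : EqOn f' 0 s) {m : ℝ}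
    (hm : m ∈ s) (hfm : f m = 0) : EqOn f 0 s :=
  hs.eqOn_of_deriv_eq hs' (fun x hx => (hf x hx).differentiableAt.differentiableWithinAt)
    (differentiableOn_const 0) (fun x hx => by simp [(hf x hx).deriv, hf' hx]) hm hfm

theorem IsOpen.eqOn_zero_of_hasDerivAt_of_harmonic {s : Set ℝ} (hs : IsOpen s)
    (hs' : IsPreconnected s) {c : ℝ} (hc : 0 < c) {u v : ℝ → ℝ}
    (hu : ∀ x ∈ s, HasDerivAt u (v x) x) (hv : ∀ x ∈ s, HasDerivAt v (-(c * u x)) x)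
    {m : ℝ} (hm : m ∈ s) (hum : u m = 0) (hvm : v m = 0) : EqOn u 0 s := by
  have henergy : EqOn (fun x => v x ^ 2 + c * u x ^ 2) 0 s :=
    hs.eqOn_zero_of_hasDerivAt hs'
      (fun x hx => ((hv x hx).pow 2).add (((hu x hx).pow 2).const_mul c))
      (fun x _ => by simp only [Pi.zero_apply]; ring) hm (by simp [hum, hvm])
  intro x hx
  have h := henergy hx
  simp only [Pi.zero_apply] at h ⊢
  have hcu : c * u x ^ 2 = 0 := by nlinarith [sq_nonneg (v x), sq_nonneg (u x)]
  simpa [hc.ne'] using hcu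

theorem IsOpen.eqOn_zero_of_fourth_order {s : Set ℝ} (hs : IsOpen s) (hs' : IsPreconnected s)
    {c : ℝ} (hc : 0 < c) {f f₁ f₂ f₃ : ℝ → ℝ} (hf : ∀ x ∈ s, HasDerivAt f (f₁ x) x)
    (hf₁ : ∀ x ∈ s, HasDerivAt f₁ (f₂ x) x) (hf₂ : ∀ x ∈ s, HasDerivAt f₂ (f₃ x) x)
    (hf₃ : ∀ x ∈ s, HasDerivAt f₃ (-(c * f₂ x)) x) {m : ℝ} (hm : m ∈ s)
    (h₀ : f m = 0) (h₁ : f₁ m = 0) (h₂ : f₂ m = 0) (h₃ : f₃ m = 0) : EqOn f 0 s := by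
  have e₂ := hs.eqOn_zero_of_hasDerivAt_of_harmonic hs' hc hf₂ hf₃ hm h₂ h₃
  have e₁ := hs.eqOn_zero_of_hasDerivAt hs' hf₁ e₂ hm h₁
  exact hs.eqOn_zero_of_hasDerivAt hs' hf e₁ hm h₀

noncomputable def trigAffine (β m A B D E x : ℝ) : ℝ :=
  A * cos (β * (x - m)) + B * sin (β * (x - m)) + D * (x - m) + E

theorem continuous_trigAffine (β m A B D E : ℝ) : Continuous (trigAffine β m A B D E) := by
  unfold trigAffine; fun_prop

theorem hasDerivAt_trigAffine (β m A B D E x : ℝ) :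
    HasDerivAt (trigAffine β m A B D E) (trigAffine β m (B * β) (-(A * β)) 0 D x) x := by
  have hlin : HasDerivAt (fun t => β * (t - m)) β x := by
    simpa using ((hasDerivAt_id x).sub_const m).const_mul β
  have hsub : HasDerivAt (fun t => t - m) 1 x := (hasDerivAt_id x).sub_const m
  exact ((((hlin.cos.const_mul A).add (hlin.sin.const_mul B)).add
    (hsub.const_mul D)).add_const E).congr_deriv (by simp only [trigAffine]; ring)

theorem IsOpen.exists_eqOn_trigAffine {s : Set ℝ} (hs : IsOpen s) (hs' : IsPreconnected s)
    {β : ℝ} (hβ : 0 < β) {ζ : ℝ → ℝ} (hζ : ContDiffOn ℝ 4 ζ s)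
    (hode : ∀ x ∈ s, iteratedDeriv 4 ζ x + β ^ 2 * iteratedDeriv 2 ζ x = 0) {m : ℝ}
    (hm : m ∈ s) : ∃ A B D E, EqOn ζ (trigAffine β m A B D E) s := by
  set A := -(iteratedDeriv 2 ζ m / β ^ 2)
  set B := -(iteratedDeriv 3 ζ m / β ^ 3)
  set D := iteratedDeriv 1 ζ m - B * β
  set E := ζ m - A
  refine ⟨A, B, D, E, fun x hx => sub_eq_zero.1 ?_⟩
  have hF₁ : ∀ x, HasDerivAt (trigAffine β m (B * β) (-(A * β)) 0 D)
      (trigAffine β m (-(A * β ^ 2)) (-(B * β ^ 2)) 0 0 x) x := fun x =>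
    (hasDerivAt_trigAffine _ _ _ _ _ _ x).congr_deriv (by simp only [trigAffine]; ring)
  have hF₂ : ∀ x, HasDerivAt (trigAffine β m (-(A * β ^ 2)) (-(B * β ^ 2)) 0 0)
      (trigAffine β m (-(B * β ^ 3)) (A * β ^ 3) 0 0 x) x := fun x =>
    (hasDerivAt_trigAffine _ _ _ _ _ _ x).congr_deriv (by simp only [trigAffine]; ring)
  have hF₃ : ∀ x, HasDerivAt (trigAffine β m (-(B * β ^ 3)) (A * β ^ 3) 0 0)
      (-(β ^ 2 * trigAffine β m (-(A * β ^ 2)) (-(B * β ^ 2)) 0 0 x)) x := fun x =>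
    (hasDerivAt_trigAffine _ _ _ _ _ _ x).congr_deriv (by simp only [trigAffine]; ring)
  have hζ₀ : ∀ x ∈ s, HasDerivAt ζ (iteratedDeriv 1 ζ x) x := fun x hx => by
    simpa using hζ.hasDerivAt_iteratedDeriv hs (k := 0) (by norm_num) hx
  have hζ₃ : ∀ x ∈ s, HasDerivAt (iteratedDeriv 3 ζ) (-(β ^ 2 * iteratedDeriv 2 ζ x)) x :=
    fun x hx => (hζ.hasDerivAt_iteratedDeriv hs (k := 3) (by norm_num) hx).congr_deriv
      (eq_neg_of_add_eq_zero_left (hode x hx))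
  refine hs.eqOn_zero_of_fourth_order hs' (pow_pos hβ 2)
    (fun x hx => (hζ₀ x hx).sub (hasDerivAt_trigAffine β m A B D E x))
    (fun x hx => (hζ.hasDerivAt_iteratedDeriv hs (k := 1) (by norm_num) hx).sub (hF₁ x))
    (fun x hx => (hζ.hasDerivAt_iteratedDeriv hs (k := 2) (by norm_num) hx).sub (hF₂ x))
    (fun x hx => ((hζ₃ x hx).sub (hF₃ x)).congr_deriv (by ring)) hm ?_ ?_ ?_ ?_ hx
  all_goals norm_num [trigAffine, A, B, D, E, hβ.ne']

theorem Set.EqOn.Icc_of_Ioo {α β : Type*} [LinearOrder α] [TopologicalSpace α] [OrderTopology α]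
    [DenselyOrdered α] [TopologicalSpace β] [T2Space β] {a b : α} (hab : a < b) {f g : α → β}
    (h : EqOn f g (Ioo a b)) (hf : ContinuousOn f (Icc a b)) (hg : ContinuousOn g (Icc a b)) :
    EqOn f g (Icc a b) :=
  h.of_subset_closure hf hg Ioo_subset_Icc_self (closure_Ioo hab.ne).ge

theorem Set.EqOn.derivWithin_Icc_of_Ioo {a b : ℝ} (hab : a < b) {f g g' : ℝ → ℝ}
    (h : EqOn f g (Ioo a b)) (hf : ContDiffOn ℝ 1 f (Icc a b))
    (hg : ∀ x, HasDerivAt g (g' x) x) (hg' : Continuous g') :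
    EqOn (derivWithin f (Icc a b)) g' (Icc a b) := by
  refine EqOn.Icc_of_Ioo hab (fun x hx => ?_)
    (hf.continuousOn_derivWithin (uniqueDiffOn_Icc hab) le_rfl) hg'.continuousOn
  rw [derivWithin_of_mem_nhds (Icc_mem_nhds hx.1 hx.2),
    (h.eventuallyEq_of_mem (Ioo_mem_nhds hx.1 hx.2)).deriv_eq, (hg x).deriv]

theorem trigAffine_coeffs_of_boundary {β x₀ y₀ A B D E : ℝ} (hβ : 0 < β) (hxy : x₀ < y₀)
    (h₀ : trigAffine β ((x₀ + y₀) / 2) A B D E x₀ = 0)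
    (h₁ : trigAffine β ((x₀ + y₀) / 2) A B D E y₀ = 0)
    (h₀' : trigAffine β ((x₀ + y₀) / 2) (B * β) (-(A * β)) 0 D x₀ = 0)
    (h₁' : trigAffine β ((x₀ + y₀) / 2) (B * β) (-(A * β)) 0 D y₀ = 0)
    (hpos : ∀ x ∈ Ioo x₀ y₀, 0 < trigAffine β ((x₀ + y₀) / 2) A B D E x) :
    β * (y₀ - x₀) = 2 * π ∧ 0 < A ∧ B = 0 ∧ D = 0 ∧ E = A := by
  set m := (x₀ + y₀) / 2
  set L := (y₀ - x₀) / 2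
  have hL : 0 < L := by simp only [L]; linarith
  have hx₀ : x₀ - m = -L := by simp only [m, L]; ring
  have hy₀ : y₀ - m = L := by simp only [m, L]; ring
  simp only [trigAffine, hx₀, hy₀, mul_neg, cos_neg, sin_neg] at h₀ h₁ h₀' h₁'
  have hAsin : A * sin (β * L) = 0 := by
    have : β * (A * sin (β * L)) = 0 := by linarith
    exact (mul_eq_zero.1 this).resolve_left hβ.ne'
  have hE : E = -(A * cos (β * L)) := by linarith
  have hmid : 0 < A + E := by
    simpa [trigAffine] using hpos m ⟨by simp only [m]; linarith, by simp only [m]; linarith⟩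
  have hA : A ≠ 0 := by rintro rfl; simp only [zero_mul, neg_zero] at hE; linarith
  have hsin : sin (β * L) = 0 := (mul_eq_zero.1 hAsin).resolve_left hA
  have hcos : cos (β * L) = -1 := by
    rcases sin_eq_zero_iff_cos_eq.1 hsin with h | h
    · rw [h] at hE; linarith
    · exact h
  have hD : D = 0 := by
    have : D * L = 0 := by rw [hsin] at h₀ h₁; linarith
    exact (mul_eq_zero.1 this).resolve_right hL.ne'
  have hB : B = 0 := by
    rw [hsin, hcos, hD] at h₁'
    have : B * β = 0 := by linarith
    exact (mul_eq_zero.1 this).resolve_right hβ.ne'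
  have hle : β * L ≤ π := by
    by_contra! h
    have hπL : π / β < L := (div_lt_iff₀' hβ).2 h
    have := hpos (m + π / β)
      ⟨by have := div_pos pi_pos hβ; linarith, by linarith⟩
    simp [trigAffine, hB, hD, hE, hcos, mul_div_cancel₀ _ hβ.ne'] at this
  have hπ : β * L = π :=
    injOn_cos ⟨(mul_pos hβ hL).le, hle⟩ ⟨pi_pos.le, le_rfl⟩ (hcos.trans cos_pi.symm)
  refine ⟨?_, by rw [hcos] at hE; linarith, hB, hD, by rw [hcos] at hE; linarith⟩
  rw [← hπ]; simp only [L]; ring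

/-- For `c > 0` and `x₀ < y₀`, if `ζ` is C¹ on `[x₀, y₀]`, C⁴ on `(x₀, y₀)`,
solves `ζ⁗ + c·ζ″ = 0` on `(x₀, y₀)`, is positive on `(x₀, y₀)`, and satisfies
`ζ = ζ' = 0` at both endpoints, then with `β = √c` one has `y₀ - x₀ = 2π/β` and there is a
constant `A₀ > 0` with `ζ(x) = A₀(cos(β(x - m)) + 1)` on `[x₀, y₀]`, `m = (x₀ + y₀)/2`. -/
theorem stmt_19 (c x₀ y₀ : ℝ) (hc : 0 < c) (hxy : x₀ < y₀) (ζ : ℝ → ℝ)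
    (h1 : ContDiffOn ℝ 1 ζ (Icc x₀ y₀))
    (h4 : ContDiffOn ℝ 4 ζ (Ioo x₀ y₀))
    (hode : ∀ x ∈ Ioo x₀ y₀, iteratedDeriv 4 ζ x + c * iteratedDeriv 2 ζ x = 0)
    (hpos : ∀ x ∈ Ioo x₀ y₀, 0 < ζ x)
    (hb0 : ζ x₀ = 0) (hb1 : ζ y₀ = 0)
    (hd0 : derivWithin ζ (Icc x₀ y₀) x₀ = 0)
    (hd1 : derivWithin ζ (Icc x₀ y₀) y₀ = 0) :
    y₀ - x₀ = 2 * Real.pi / Real.sqrt c ∧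
    ∃ A₀ : ℝ, 0 < A₀ ∧ ∀ x ∈ Icc x₀ y₀,
      ζ x = A₀ * (Real.cos (Real.sqrt c * (x - (x₀ + y₀)/2)) + 1) := by
  have hβ : 0 < √c := sqrt_pos.2 hc
  have hm : (x₀ + y₀) / 2 ∈ Ioo x₀ y₀ := ⟨by linarith, by linarith⟩
  obtain ⟨A, B, D, E, hζ⟩ := isOpen_Ioo.exists_eqOn_trigAffine isPreconnected_Ioo hβ h4
    (by simpa only [sq_sqrt hc.le] using hode) hm
  have hζ' := hζ.derivWithin_Icc_of_Ioo hxy h1 (hasDerivAt_trigAffine _ _ A B D E)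
    (continuous_trigAffine _ _ _ _ _ _)
  replace hζ := hζ.Icc_of_Ioo hxy h1.continuousOn (continuous_trigAffine _ _ _ _ _ _).continuousOn
  have hx₀ : x₀ ∈ Icc x₀ y₀ := left_mem_Icc.2 hxy.le
  have hy₀ : y₀ ∈ Icc x₀ y₀ := right_mem_Icc.2 hxy.le
  obtain ⟨hlen, hA, hB, hD, hE⟩ := trigAffine_coeffs_of_boundary hβ hxy
    (hζ hx₀ ▸ hb0) (hζ hy₀ ▸ hb1) (hζ' hx₀ ▸ hd0) (hζ' hy₀ ▸ hd1)
    (fun x hx => hζ (Ioo_subset_Icc_self hx) ▸ hpos x hx)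
  refine ⟨by rw [eq_div_iff hβ.ne']; linarith, A, hA, fun x hx => ?_⟩
  rw [hζ hx, trigAffine, hB, hD, hE]; ring
end
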